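/- Let φ be a holomorphic self-map of the open right half-plane Π such that the closure of φ(Π) is a compact subset of Π. Then the composition operator C_φ on H^∞(Π), defined by (C_φ f)(z) = f(φ(z)), is a compact operator. -/

import Mathlib

/-!
Let `K` be the closure of `φ(Π)`, a compact subset of `Π`, and choose `δ > 0` with the
`δ`-neighbourhood of `K` inside `Π`. By the Schwarz lemma on discs of radius `δ`, every `f` in the
unit ball of `H^∞(Π)` is `2/δ`-Lipschitz on `K`, so by Arzelà–Ascoli the restrictions to `K` of the
unit ball form a relatively compact set of bounded continuous functions on `K`. Since
`‖f ∘ φ - g ∘ φ‖ ≤ sup_K |f - g|`, the image of the unit ball under `C_φ` is totally bounded, and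
it is relatively compact because `H^∞(Π)` is complete: locally uniform limits of holomorphic
functions are holomorphic.
-/

open Complex BoundedContinuousFunction
open scoped ENNReal

/-- The open right half-plane `Π = {z : ℂ | 0 < Re z}`. -/
def RHP : Set ℂ := {z : ℂ | 0 < z.re}

/-- Extension of a bounded continuous function on `Π` to `ℂ` (by zero off `Π`). -/
noncomputable def extFun (f : ↥RHP →ᵇ ℂ) : ℂ → ℂ :=
  fun z => if h : 0 < z.re then f ⟨z, h⟩ else 0

/-- `H^∞(Π)`: the space of bounded holomorphic functions on `Π`, realised as the
submodule of the Banach space of bounded continuous functions on `Π` (with the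
supremum norm) consisting of the holomorphic ones. -/
noncomputable def Hinf : Submodule ℂ (↥RHP →ᵇ ℂ) where
  carrier := {f | DifferentiableOn ℂ (extFun f) RHP}
  add_mem' := by
    intro f g hf hg
    refine (DifferentiableOn.add hf hg).congr (fun z hz => ?_)
    have hz' : 0 < z.re := hz
    simp only [extFun]
    simp only [Pi.add_apply, extFun, dif_pos hz', BoundedContinuousFunction.coe_add]
    try rfl
  zero_mem' := by
    refine (differentiableOn_const 0).congr (fun z hz => ?_)
    have hz' : 0 < z.re := hz
    simp only [extFun]
    rw [dif_pos hz']
    rfl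
  smul_mem' := by
    intro c f hf
    refine (hf.const_smul c).congr (fun z hz => ?_)
    have hz' : 0 < z.re := hz
    simp only [extFun]
    simp only [Pi.smul_apply, extFun, dif_pos hz', BoundedContinuousFunction.coe_smul]
    try rfl

lemma mem_shift (z : ↥RHP) : (1 : ℂ) + z.1 ∈ RHP := by
  have hz := z.2
  simp only [RHP, Set.mem_setOf_eq, Complex.add_re, Complex.one_re] at *
  linarith

lemma mem_div (z : ↥RHP) : z.1 / (1 + z.1) ∈ RHP := by
  have hz := z.2
  simp only [RHP, Set.mem_setOf_eq] at hz ⊢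
  have hw : (1 + z.1) ≠ 0 := by
    intro h
    have h2 : (1 + z.1).re = 0 := by rw [h]; simp
    simp only [Complex.add_re, Complex.one_re] at h2
    linarith
  have hns : 0 < Complex.normSq (1 + z.1) := Complex.normSq_pos.mpr hw
  rw [Complex.div_re]
  have h1 : 0 < z.1.re * (1 + z.1).re := by
    simp only [Complex.add_re, Complex.one_re]
    nlinarith
  have h2 : 0 ≤ z.1.im * (1 + z.1).im := by
    simp only [Complex.add_im, Complex.one_im, zero_add]
    nlinarith [sq_nonneg z.1.im]
  have := div_pos h1 hns
  have := div_nonneg h2 hns.le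
  linarith

open Metric Filter Topology

theorem Complex.dist_le_div_mul_dist_of_norm_le {U K : Set ℂ} {g : ℂ → ℂ}
    {M δ : ℝ} (hg : DifferentiableOn ℂ g U) (hM : ∀ z ∈ U, ‖g z‖ ≤ M) (hδ : 0 < δ)
    (hKU : thickening δ K ⊆ U) {a b : ℂ} (ha : a ∈ K) (hb : b ∈ U) :
    dist (g b) (g a) ≤ 2 * M / δ * dist b a := by
  have hball : ball a δ ⊆ U := (ball_subset_thickening ha δ).trans hKU
  have hbound : ∀ z ∈ U, dist (g z) (g a) ≤ 2 * M := fun z hz =>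
    (dist_le_norm_add_norm _ _).trans (by linarith [hM z hz, hM a (hball (mem_ball_self hδ))])
  by_cases hba : b ∈ ball a δ
  · -- Schwarz lemma on `ball a δ`, whose image lies in `closedBall (g a) (2 * M)`.
    exact Complex.dist_le_div_mul_dist_of_mapsTo_ball (hg.mono hball)
      (fun z hz => mem_closedBall.2 (hbound z (hball hz))) hba
  · have hM0 : 0 ≤ 2 * M := dist_nonneg.trans (hbound b hb)
    calc dist (g b) (g a) ≤ 2 * M := hbound b hb
      _ ≤ 2 * M / δ * dist b a := by
        rw [div_mul_eq_mul_div, le_div_iff₀ hδ]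
        exact mul_le_mul_of_nonneg_left (not_lt.1 hba) hM0

theorem TotallyBounded.image_of_dist_le {X Y Z : Type*} [PseudoMetricSpace Y]
    [PseudoMetricSpace Z] {f : X → Y} {g : X → Z} {s : Set X} (hg : TotallyBounded (g '' s))
    (hfg : ∀ x ∈ s, ∀ y ∈ s, dist (f x) (f y) ≤ dist (g x) (g y)) :
    TotallyBounded (f '' s) := by
  refine Metric.totallyBounded_iff.2 fun ε hε => ?_
  obtain ⟨t, hts, htfin, hcover⟩ :=
    Set.exists_subset_image_finite_and.1 (Metric.finite_approx_of_totallyBounded hg ε hε)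
  refine ⟨f '' t, htfin.image f, ?_⟩
  rintro _ ⟨x, hx, rfl⟩
  obtain ⟨_, ⟨y, hy, rfl⟩, hxy⟩ := Set.mem_iUnion₂.1 (hcover (Set.mem_image_of_mem g hx))
  exact Set.mem_iUnion₂.2 ⟨f y, Set.mem_image_of_mem f hy,
    (hfg x hx y (hts hy)).trans_lt (mem_ball.1 hxy)⟩

lemma isOpen_RHP : IsOpen RHP := isOpen_lt continuous_const Complex.continuous_re

lemma extFun_apply (f : ↥RHP →ᵇ ℂ) {z : ℂ} (hz : z ∈ RHP) : extFun f z = f ⟨z, hz⟩ := dif_pos hz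

lemma extFun_coe (f : ↥RHP →ᵇ ℂ) (z : ↥RHP) : extFun f z = f z := extFun_apply f z.2

lemma isClosed_Hinf : IsClosed (Hinf : Set (↥RHP →ᵇ ℂ)) := by
  refine isClosed_of_closure_subset fun f hf => ?_
  obtain ⟨u, hu, hlim⟩ := mem_closure_iff_seq_limit.1 hf
  have hunif : TendstoUniformlyOn (fun n => extFun (u n)) (extFun f) atTop RHP := by
    rw [tendstoUniformlyOn_iff_tendstoUniformly_comp_coe]
    simpa only [Function.comp_def, extFun_coe] using
      BoundedContinuousFunction.tendsto_iff_tendstoUniformly.1 hlim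
  exact hunif.tendstoLocallyUniformlyOn.differentiableOn (Eventually.of_forall hu) isOpen_RHP

instance : CompleteSpace Hinf := isClosed_Hinf.completeSpace_coe

lemma norm_extFun_le (f : Hinf) {z : ℂ} (hz : z ∈ RHP) : ‖extFun f.1 z‖ ≤ ‖f‖ := by
  rw [extFun_apply f.1 hz]
  exact BoundedContinuousFunction.norm_coe_le_norm _ _

noncomputable def Hinf.restrict {K : Set ℂ} (hK : K ⊆ RHP) (f : Hinf) : K →ᵇ ℂ :=
  f.1.compContinuous ⟨Set.inclusion hK, continuous_inclusion hK⟩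

lemma Hinf.restrict_apply {K : Set ℂ} (hK : K ⊆ RHP) (f : Hinf) (z : K) :
    Hinf.restrict hK f z = extFun f.1 z :=
  (extFun_apply f.1 (hK z.2)).symm

theorem Hinf.isCompact_closure_restrict_image_closedBall {K : Set ℂ} (hK : IsCompact K)
    (hKRHP : K ⊆ RHP) (r : ℝ) :
    IsCompact (closure (Hinf.restrict hKRHP '' closedBall 0 r)) := by
  have : CompactSpace K := isCompact_iff_compactSpace.1 hK
  obtain ⟨δ, hδ, hKδ⟩ := hK.exists_thickening_subset_open isOpen_RHP hKRHP
  have hbound : ∀ f ∈ closedBall (0 : Hinf) r, ∀ z ∈ RHP, ‖extFun f.1 z‖ ≤ r :=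
    fun f hf z hz => (norm_extFun_le f hz).trans (mem_closedBall_zero_iff.1 hf)
  refine arzela_ascoli (closedBall 0 r) (isCompact_closedBall 0 r) _ ?_ ?_
  · rintro _ z ⟨f, hf, rfl⟩
    rw [mem_closedBall_zero_iff, restrict_apply]
    exact hbound f hf z (hKRHP z.2)
  · refine equicontinuous_of_continuity_modulus (fun t => 2 * r / δ * t)
      (by simpa using (tendsto_id (x := 𝓝 (0 : ℝ))).const_mul (2 * r / δ)) _ ?_
    rintro z w ⟨_, f, hf, rfl⟩
    simp only [restrict_apply]
    exact Complex.dist_le_div_mul_dist_of_norm_le f.2 (hbound f hf) hδ hKδ w.2 (hKRHP z.2)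

lemma Hinf.dist_le_dist_restrict {φ : ℂ → ℂ} {K : Set ℂ} (hK : K ⊆ RHP)
    (hφK : Set.MapsTo φ RHP K) {f g F G : Hinf} (hF : ∀ z : RHP, F.1 z = extFun f.1 (φ z))
    (hG : ∀ z : RHP, G.1 z = extFun g.1 (φ z)) :
    dist F G ≤ dist (Hinf.restrict hK f) (Hinf.restrict hK g) := by
  refine (BoundedContinuousFunction.dist_le dist_nonneg).2 fun z => ?_
  rw [hF, hG, ← restrict_apply hK f ⟨φ z, hφK z.2⟩, ← restrict_apply hK g ⟨φ z, hφK z.2⟩]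
  exact dist_coe_le_dist _

theorem composition_operator_compact_general
    (φ : ℂ → ℂ) (hφmap : Set.MapsTo φ RHP RHP)
    (hcl : closure (φ '' RHP) ⊆ RHP) (hcpt : IsCompact (closure (φ '' RHP)))
    (T : ↥Hinf →L[ℂ] ↥Hinf)
    (hT : ∀ f : ↥Hinf, ∀ z : ↥RHP, (T f).1 z = f.1 ⟨φ z.1, hφmap z.2⟩) :
    IsCompactOperator ⇑T := by
  have hTφ : ∀ f : Hinf, ∀ z : RHP, (T f).1 z = extFun f.1 (φ z) := fun f z => by
    rw [hT, extFun_apply]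
  have hφK : Set.MapsTo φ RHP (closure (φ '' RHP)) :=
    (Set.mapsTo_image φ RHP).mono_right subset_closure
  have hR : TotallyBounded (Hinf.restrict hcl '' closedBall 0 1) :=
    (Hinf.isCompact_closure_restrict_image_closedBall hcpt hcl 1).totallyBounded.subset
      subset_closure
  have hTB : TotallyBounded (T '' closedBall 0 1) :=
    hR.image_of_dist_le fun f _ g _ => Hinf.dist_le_dist_restrict hcl hφK (hTφ f) (hTφ g)
  exact (isCompactOperator_iff_isCompact_closure_image_closedBall (T : Hinf →ₗ[ℂ] Hinf)
    one_pos).2 (hTB.closure.isCompact_of_isClosed isClosed_closure)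

/-- If `φ` is a holomorphic self-map of `Π` whose image has compact
closure contained in `Π`, then the composition operator `C_φ f = f ∘ φ` on `H^∞(Π)` is a
compact operator. -/
theorem composition_operator_compact
    (φ : ℂ → ℂ) (hφmap : Set.MapsTo φ RHP RHP) (hφdiff : DifferentiableOn ℂ φ RHP)
    (hcl : closure (φ '' RHP) ⊆ RHP) (hcpt : IsCompact (closure (φ '' RHP)))
    (T : ↥Hinf →L[ℂ] ↥Hinf)
    (hT : ∀ f : ↥Hinf, ∀ z : ↥RHP, (T f).1 z = f.1 ⟨φ z.1, hφmap z.2⟩) :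
    IsCompactOperator ⇑T :=
  composition_operator_compact_general φ hφmap hcl hcpt T hT
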